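/- Let R be a differentiable convex function on a convex set S, and let x' ∈ int(S) and u ∈ S. If x minimizes y ↦ B_R(y‖x') over S, then B_R(u‖x') ≥ B_R(u‖x), i.e., the Bregman projection satisfies a generalized Pythagorean inequality. -/

import Mathlib

/-!
Writing `D` for the Bregman divergence of `R`, the three-point identity
`D(u‖x') - D(u‖x) = D(x‖x') + ⟪∇R(x) - ∇R(x'), u - x⟫` reduces the claim to two facts:
`D(x‖x') ≥ 0` is the tangent-line inequality for the convex function `R`, and the inner product
is nonnegative by first-order optimality of `x` for `y ↦ D(y‖x')`, whose gradient at `x` is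
`∇R(x) - ∇R(x')`.
-/

open InnerProductSpace

section

variable {E : Type*} [NormedAddCommGroup E] [InnerProductSpace ℝ E]

theorem ConvexOn.inner_le_sub_of_hasGradientAt [CompleteSpace E] {s : Set E} {f : E → ℝ}
    {g x y : E} (hf : ConvexOn ℝ s f) (hx : x ∈ s) (hy : y ∈ s) (hg : HasGradientAt f g x) :
    ⟪g, y - x⟫_ℝ ≤ f y - f x := by
  let l : ℝ →ᵃ[ℝ] E := AffineMap.lineMap x y
  have hg₀ : HasFDerivAt f (toDual ℝ E g) (l 0) := by simpa [l] using hg.hasFDerivAt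
  have hline : HasDerivAt (f ∘ l) ⟪g, y - x⟫_ℝ 0 := by
    simpa using hg₀.comp_hasDerivAt 0 AffineMap.hasDerivAt_lineMap
  simpa [l, slope] using (hf.comp_affineMap l).le_slope_of_hasDerivAt
    (x := 0) (y := 1) (by simpa [l]) (by simpa [l]) zero_lt_one hline

theorem IsMinOn.inner_sub_nonneg_of_hasGradientAt [CompleteSpace E] {s : Set E} {f : E → ℝ}
    {g x y : E} (hs : Convex ℝ s) (hmin : IsMinOn f s x) (hx : x ∈ s) (hy : y ∈ s)
    (hg : HasGradientAt f g x) : 0 ≤ ⟪g, y - x⟫_ℝ := by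
  simpa using hmin.localize.hasFDerivWithinAt_nonneg hg.hasFDerivAt.hasFDerivWithinAt
    (sub_mem_posTangentConeAt_of_segment_subset (hs.segment_subset hx hy))

def bregmanDiv (R : E → ℝ) (g : E → E) (y x : E) : ℝ := R y - R x - ⟪g x, y - x⟫_ℝ

theorem bregmanDiv_nonneg [CompleteSpace E] {s : Set E} {R : E → ℝ} {g : E → E} {x y : E}
    (hR : ConvexOn ℝ s R) (hy : y ∈ s) (hx : x ∈ s) (hg : HasGradientAt R (g x) x) :
    0 ≤ bregmanDiv R g y x :=
  sub_nonneg.2 (hR.inner_le_sub_of_hasGradientAt hx hy hg)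

theorem bregmanDiv_sub_bregmanDiv (R : E → ℝ) (g : E → E) (u x x' : E) :
    bregmanDiv R g u x' - bregmanDiv R g u x =
      bregmanDiv R g x x' + ⟪g x - g x', u - x⟫_ℝ := by
  simp only [bregmanDiv, inner_sub_left, inner_sub_right]
  ring

theorem hasGradientAt_bregmanDiv_left [CompleteSpace E] {R : E → ℝ} {g : E → E} {x x' : E}
    (hR : HasGradientAt R (g x) x) :
    HasGradientAt (fun y ↦ bregmanDiv R g y x') (g x - g x') x := by
  have hlin : HasFDerivAt (fun y ↦ ⟪g x', y - x'⟫_ℝ) (toDual ℝ E (g x')) x := by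
    simpa [inner_sub_right] using ((toDual ℝ E) (g x')).hasFDerivAt.sub_const ⟪g x', x'⟫_ℝ
  rw [hasGradientAt_iff_hasFDerivAt, map_sub]
  exact (hR.hasFDerivAt.sub_const _).sub hlin

end

theorem bregman_pythagorean_general
    {E : Type*} [NormedAddCommGroup E] [InnerProductSpace ℝ E] [CompleteSpace E]
    (s : Set E)
    (R : E → ℝ) (g : E → E)
    (hR : ConvexOn ℝ s R)
    (hg : ∀ x ∈ s, HasGradientAt R (g x) x)
    (B : E → E → ℝ)
    (hB : ∀ y x, B y x = R y - R x - ⟪g x, y - x⟫_ℝ)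
    (x' : E) (hx' : x' ∈ interior s) (u : E) (hu : u ∈ s)
    (x : E) (hx : x ∈ s) (hmin : ∀ y ∈ s, B x x' ≤ B y x') :
    B u x' ≥ B u x := by
  obtain rfl : B = bregmanDiv R g := funext₂ hB
  have hx's : x' ∈ s := interior_subset hx'
  have hdiv : 0 ≤ bregmanDiv R g x x' := bregmanDiv_nonneg hR hx hx's (hg x' hx's)
  have hopt : 0 ≤ ⟪g x - g x', u - x⟫_ℝ :=
    (isMinOn_iff.2 hmin).inner_sub_nonneg_of_hasGradientAt hR.1 hx hu
      (hasGradientAt_bregmanDiv_left (hg x hx))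
  rw [ge_iff_le, ← sub_nonneg, bregmanDiv_sub_bregmanDiv]
  exact add_nonneg hdiv hopt

theorem bregman_pythagorean
    {E : Type*} [NormedAddCommGroup E] [InnerProductSpace ℝ E] [CompleteSpace E]
    (s : Set E) (hconv : Convex ℝ s)
    (R : E → ℝ) (g : E → E)
    (hR : ConvexOn ℝ s R)
    (hg : ∀ x ∈ s, HasGradientAt R (g x) x)
    (B : E → E → ℝ)
    (hB : ∀ y x, B y x = R y - R x - ⟪g x, y - x⟫_ℝ)
    (x' : E) (hx' : x' ∈ interior s) (u : E) (hu : u ∈ s)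
    (x : E) (hx : x ∈ s) (hmin : ∀ y ∈ s, B x x' ≤ B y x') :
    B u x' ≥ B u x :=
  bregman_pythagorean_general s R g hR hg B hB x' hx' u hu x hx hmin
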